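/- arXiv:1109.5582 — 2 statements merged into one kernel-verified Lean document; each statement's English description precedes it below -/
import Mathlib

section
/- Suppose weights w : {finite subsets of ℕ} → ℂ satisfy the strengthened Kotecky–Preiss criterion ∑_{A : A ∼ A'} e^{δ|A|} d(A)^α |w(A)| ≤ δ |A'| for all finite A' ⊂ ℕ, where d(A) = 1 + max A − min A, α > 0, A ∼ A' means dist(A,A') ≤ 1, and every A with w(A) ≠ 0 has d(A) > 1. Then the truncated (cluster) weights w^T satisfy the decay estimate: for every finite A₀ ⊂ ℕ and every m ≥ 0, ∑_{clusters 𝒜 with 𝒜 ∼ A₀ and d(𝒜) ≥ m} |w^T(𝒜)| ≤ C δ |A₀| (1+m)^{−α}. -/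
open scoped BigOperators ENNReal
attribute [local instance] Classical.propDecidable

noncomputable section

/-- Two finite subsets of `ℕ` are adjacent iff their distance is at most `1`. -/
def adjP (A B : Finset ℕ) : Prop := ∃ a ∈ A, ∃ b ∈ B, a ≤ b + 1 ∧ b ≤ a + 1

/-- The diameter `d(A) = 1 + max A − min A` of a finite subset of `ℕ`. -/
def diamP (A : Finset ℕ) : ℕ := 1 + WithBot.unbotD 0 (A.max) - WithTop.untopD 0 (A.min)

/-- A collection of polymers is a cluster: its adjacency graph is connected. -/
def clusterConn (𝒜 : Finset (Finset ℕ)) : Prop :=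
  ∀ A ∈ 𝒜, ∀ B ∈ 𝒜, Relation.ReflTransGen (fun X Y => X ∈ 𝒜 ∧ Y ∈ 𝒜 ∧ adjP X Y) A B

/-- The graph on vertex set `V` with edge set `E` is connected. -/
def connectedOn (V : Finset (Finset ℕ)) (E : Finset (Sym2 (Finset ℕ))) : Prop :=
  ∀ x ∈ V, ∀ y ∈ V, Relation.ReflTransGen (fun u v => s(u, v) ∈ E) x y

/-- The truncated (cluster) weight
`w^T(𝒜) = ∑_{connected graphs G on 𝒜} (−1)^{|E(G)|} ∏_{{A,A'} ∈ E(G)} 1[A ∼ A'] ∏_{A ∈ 𝒜} w(A)`. -/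
def truncWeight (w : Finset ℕ → ℂ) (𝒜 : Finset (Finset ℕ)) : ℂ :=
  ∑ E ∈ ((𝒜.sym2.filter fun e => ¬ e.IsDiag).powerset.filter fun E => connectedOn 𝒜 E),
    (-1 : ℂ) ^ E.card
      * (∏ e ∈ E, if ∀ X Y : Finset ℕ, e = s(X, Y) → adjP X Y then (1 : ℂ) else 0)
      * ∏ A ∈ 𝒜, w A


/-!
Penrose's tree-graph inequality bounds `|w^T(𝒜)|` by `∏ |w(A)|` times the number of spanning trees
of the adjacency graph of `𝒜` rooted at a polymer touching `A₀`: sending a connected edge set to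
its breadth-first-search tree, every fibre is an interval of edge sets, on which the alternating
sum `∑ (-1)^|E|` is `0` or `±1`. The hulls `[min A, max A]` of the polymers of a cluster cover
the hull of their union, so `d(∪𝒜) ≤ ∑ d(A) ≤ ∏ d(A)` and `(1 + m)^α ≤ 2^α ∏ d(A)^α` when
`d(∪𝒜) ≥ m`. The sum over clusters thus becomes `2^α (1 + m)^(-α)` times a sum over rooted
trees of `∏ d(A)^α |w(A)|`, which is at most `δ |A₀|` by the Kotecký–Preiss induction on the
size of the trees: a tree is a root together with a finite set of subtrees, and
`∑_F ∏_{t ∈ F} x_t ≤ exp (∑_t x_t)`.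
-/

open Finset

theorem ENNReal.tsum_finset_prod_le_exp {ι : Type*} {f : ι → ℝ≥0∞} {c : ℝ} (hc : 0 ≤ c)
    (hf : ∑' i, f i ≤ ENNReal.ofReal c) :
    ∑' s : Finset ι, ∏ i ∈ s, f i ≤ ENNReal.ofReal (Real.exp c) := by
  have hfin : ∀ i, f i ≠ ∞ := fun i =>
    ne_top_of_le_ne_top ENNReal.ofReal_ne_top ((ENNReal.le_tsum i).trans hf)
  rw [ENNReal.tsum_eq_iSup_sum]
  refine iSup_le fun 𝒮 => ?_
  set u := 𝒮.sup id
  have hu : ∑ i ∈ u, (f i).toReal ≤ c := by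
    rw [← ENNReal.toReal_sum fun i _ => hfin i]
    exact ENNReal.toReal_le_of_le_ofReal hc ((ENNReal.sum_le_tsum u).trans hf)
  calc ∑ s ∈ 𝒮, ∏ i ∈ s, f i ≤ ∑ s ∈ u.powerset, ∏ i ∈ s, f i :=
        sum_le_sum_of_subset fun s hs => mem_powerset.2 (le_sup (f := id) hs)
    _ = ENNReal.ofReal (∏ i ∈ u, (1 + (f i).toReal)) := by
        rw [← prod_one_add, ENNReal.ofReal_prod_of_nonneg fun i _ => by positivity]
        refine prod_congr rfl fun i _ => ?_
        rw [ENNReal.ofReal_add zero_le_one ENNReal.toReal_nonneg, ENNReal.ofReal_one,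
          ENNReal.ofReal_toReal (hfin i)]
    _ ≤ ENNReal.ofReal (Real.exp c) := ENNReal.ofReal_le_ofReal
        ((Real.prod_one_add_le_exp_sum u fun _ => ENNReal.toReal_nonneg).trans
          (Real.exp_le_exp.2 hu))

theorem Finset.abs_sum_Icc_neg_one_pow_card_le {α : Type*} [DecidableEq α] (s t : Finset α) :
    |∑ u ∈ Icc s t, (-1 : ℤ) ^ #u| ≤ 1 := by
  by_cases hst : s ⊆ t
  · have hdisj : ∀ u ∈ (t \ s).powerset, Disjoint s u := fun u hu =>
      disjoint_sdiff.mono_right (mem_powerset.1 hu)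
    rw [Icc_eq_image_powerset hst, sum_image fun u hu u' hu' h => by
      rw [← union_sdiff_cancel_left (hdisj u hu), ← union_sdiff_cancel_left (hdisj u' hu'), h]]
    rw [sum_congr rfl fun u hu => by rw [card_union_of_disjoint (hdisj u hu), pow_add],
      ← mul_sum, sum_powerset_neg_one_pow_card, abs_mul, abs_pow, abs_neg, abs_one, one_pow,
      one_mul]
    split_ifs <;> simp
  · simp [Icc_eq_empty hst]

theorem Finset.sum_le_prod_of_two_le {ι : Type*} {s : Finset ι} {f : ι → ℕ}
    (hf : ∀ i ∈ s, 2 ≤ f i) : ∑ i ∈ s, f i ≤ ∏ i ∈ s, f i := by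
  induction s using Finset.cons_induction with
  | empty => simp
  | cons a s ha ih =>
    rw [sum_cons, prod_cons]
    rcases s.eq_empty_or_nonempty with rfl | ⟨b, hb⟩
    · simp
    have hfs : ∀ i ∈ s, 2 ≤ f i := fun i hi => hf i (mem_cons_of_mem hi)
    have hprod : 2 ≤ ∏ i ∈ s, f i := (hfs b hb).trans
      (single_le_prod' (fun i hi => (hfs i hi).trans' one_le_two) hb)
    have := Nat.add_le_mul (hf a (mem_cons_self a s)) hprod
    have := ih hfs
    omega

section RelWalk

variable {α : Type*} {R : α → α → Prop}

def RelWalk (R : α → α → Prop) : ℕ → α → α → Prop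
  | 0, a, b => a = b
  | n + 1, a, c => ∃ b, R a b ∧ RelWalk R n b c

theorem RelWalk.single {a b : α} (h : R a b) : RelWalk R 1 a b := ⟨b, h, rfl⟩

theorem RelWalk.append {m n : ℕ} {a b c : α} (hab : RelWalk R m a b) (hbc : RelWalk R n b c) :
    RelWalk R (m + n) a c := by
  induction m generalizing a with
  | zero => cases hab; simpa using hbc
  | succ m ih =>
    obtain ⟨d, had, hdb⟩ := hab
    rw [Nat.add_right_comm]
    exact ⟨d, had, ih hdb⟩

theorem relWalk_succ_iff {n : ℕ} {a c : α} :
    RelWalk R (n + 1) a c ↔ ∃ b, RelWalk R n a b ∧ R b c := by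
  induction n generalizing a with
  | zero => exact ⟨fun ⟨b, h, hb⟩ => ⟨a, rfl, hb ▸ h⟩, fun ⟨b, hb, h⟩ => ⟨c, hb ▸ h, rfl⟩⟩
  | succ n ih =>
    constructor
    · rintro ⟨d, had, hdc⟩
      obtain ⟨b, hdb, hbc⟩ := ih.1 hdc
      exact ⟨b, ⟨d, had, hdb⟩, hbc⟩
    · rintro ⟨b, ⟨d, had, hdb⟩, hbc⟩
      exact ⟨d, had, ih.2 ⟨b, hdb, hbc⟩⟩

theorem reflTransGen_iff_exists_relWalk {a b : α} :
    Relation.ReflTransGen R a b ↔ ∃ n, RelWalk R n a b := by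
  constructor
  · intro h
    induction h with
    | refl => exact ⟨0, rfl⟩
    | tail _ hbc ih =>
      obtain ⟨n, hn⟩ := ih
      exact ⟨n + 1, hn.append (.single hbc)⟩
  · rintro ⟨n, hn⟩
    induction n generalizing a with
    | zero => cases hn; rfl
    | succ n ih =>
      obtain ⟨c, hac, hcb⟩ := hn
      exact .head hac (ih hcb)

theorem RelWalk.le_add {ℓ : α → ℕ} (hℓ : ∀ x y, R x y → ℓ y ≤ ℓ x + 1) {n : ℕ} {a b : α}
    (h : RelWalk R n a b) : ℓ b ≤ ℓ a + n := by
  induction n generalizing a with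
  | zero => cases h; omega
  | succ n ih =>
    obtain ⟨c, hac, hcb⟩ := h
    have := ih hcb
    have := hℓ _ _ hac
    omega

theorem RelWalk.sub_of_functional (hR : ∀ a b c, R a b → R a c → b = c) {m n : ℕ} {a b c : α}
    (hmn : m ≤ n) (hab : RelWalk R m a b) (hac : RelWalk R n a c) : RelWalk R (n - m) b c := by
  induction m generalizing a n with
  | zero => cases hab; simpa using hac
  | succ m ih =>
    obtain ⟨n, rfl⟩ : ∃ n', n = n' + 1 := ⟨n - 1, by omega⟩
    obtain ⟨d, had, hdb⟩ := hab
    obtain ⟨d', had', hd'c⟩ := hac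
    cases hR _ _ _ had had'
    simpa using ih (by omega) hdb hd'c

/-- Junk value `0` when `b` is not reachable from `a`. -/
def relDist (R : α → α → Prop) (a b : α) : ℕ := sInf {n | RelWalk R n a b}

theorem relWalk_relDist {a b : α} (h : ∃ n, RelWalk R n a b) :
    RelWalk R (relDist R a b) a b :=
  Nat.sInf_mem h

theorem relDist_le {n : ℕ} {a b : α} (h : RelWalk R n a b) : relDist R a b ≤ n :=
  Nat.sInf_le h

@[simp]
theorem relDist_self (a : α) : relDist R a a = 0 :=
  Nat.le_zero.1 (relDist_le (rfl : RelWalk R 0 a a))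

theorem eq_of_relDist_eq_zero {a b : α} (h : ∃ n, RelWalk R n a b) (h0 : relDist R a b = 0) :
    a = b := by
  have := relWalk_relDist h
  rwa [h0] at this

theorem relDist_le_succ {a b c : α} (h : ∃ n, RelWalk R n a b) (hbc : R b c) :
    relDist R a c ≤ relDist R a b + 1 :=
  relDist_le ((relWalk_relDist h).append (.single hbc))

theorem exists_relDist_add_one_eq {a c : α} (h : ∃ n, RelWalk R n a c) (hac : a ≠ c) :
    ∃ b, R b c ∧ (∃ n, RelWalk R n a b) ∧ relDist R a b + 1 = relDist R a c := by
  obtain ⟨n, hn⟩ : ∃ n, relDist R a c = n + 1 :=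
    Nat.exists_eq_succ_of_ne_zero fun h0 => hac (eq_of_relDist_eq_zero h h0)
  obtain ⟨b, hab, hbc⟩ := relWalk_succ_iff.1 (hn ▸ relWalk_relDist h)
  have := relDist_le hab
  have := relDist_le_succ ⟨n, hab⟩ hbc
  exact ⟨b, hbc, ⟨n, hab⟩, by omega⟩

theorem relDist_eq_succ_of_functional (hR : ∀ a b c, R a b → R a c → b = c) {a b c : α}
    (hab : R a b) (hac : a ≠ c) (h : ∃ n, RelWalk R n a c) :
    relDist R a c = relDist R b c + 1 := by
  obtain ⟨n, hn⟩ : ∃ n, relDist R a c = n + 1 :=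
    Nat.exists_eq_succ_of_ne_zero fun h0 => hac (eq_of_relDist_eq_zero h h0)
  obtain ⟨b', hab', hb'c⟩ := hn ▸ relWalk_relDist h
  cases hR _ _ _ hab hab'
  have := relDist_le hb'c
  have := relDist_le ((RelWalk.single hab).append (relWalk_relDist ⟨n, hb'c⟩))
  omega

end RelWalk

section RootedTree

variable {V : Type*} {r c u v : V} {P : Finset (V × V)}

/-- A rooted tree is encoded by its root `r` and the set `P` of its (child, parent) pairs. -/
def treeVertices (r : V) (P : Finset (V × V)) : Finset V := insert r (P.image Prod.fst)

structure IsRootedTree (r : V) (P : Finset (V × V)) : Prop where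
  parent_mem : ∀ q ∈ P, q.2 ∈ treeVertices r P
  child_ne_root : ∀ q ∈ P, q.1 ≠ r
  parent_unique : ∀ q ∈ P, ∀ q' ∈ P, q.1 = q'.1 → q.2 = q'.2
  reaches_root : ∀ v ∈ treeVertices r P, Relation.ReflTransGen (fun x y => (x, y) ∈ P) v r

theorem root_mem_treeVertices : r ∈ treeVertices r P := mem_insert_self _ _

theorem fst_mem_treeVertices {q : V × V} (hq : q ∈ P) : q.1 ∈ treeVertices r P :=
  mem_insert_of_mem (mem_image_of_mem _ hq)

theorem exists_parent (hv : v ∈ treeVertices r P) (hvr : v ≠ r) : ∃ u, (v, u) ∈ P := by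
  rcases mem_insert.1 hv with rfl | hv
  · exact absurd rfl hvr
  · obtain ⟨q, hq, rfl⟩ := mem_image.1 hv
    exact ⟨q.2, hq⟩

def treeDepth (r : V) (P : Finset (V × V)) (v : V) : ℕ :=
  relDist (fun x y => (x, y) ∈ P) v r

@[simp]
theorem treeDepth_root : treeDepth r P r = 0 := relDist_self r

namespace IsRootedTree

theorem functional (hT : IsRootedTree r P) : ∀ a b c, (a, b) ∈ P → (a, c) ∈ P → b = c :=
  fun a b c hb hc => hT.parent_unique (a, b) hb (a, c) hc rfl

theorem exists_relWalk (hT : IsRootedTree r P) (hv : v ∈ treeVertices r P) :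
    ∃ n, RelWalk (fun x y => (x, y) ∈ P) n v r :=
  reflTransGen_iff_exists_relWalk.1 (hT.reaches_root v hv)

theorem treeDepth_eq_succ (hT : IsRootedTree r P) (h : (v, u) ∈ P) :
    treeDepth r P v = treeDepth r P u + 1 :=
  relDist_eq_succ_of_functional hT.functional h (hT.child_ne_root _ h)
    (hT.exists_relWalk (fst_mem_treeVertices h))

theorem treeDepth_eq_of (hT : IsRootedTree r P) {f : V → ℕ} (hf : ∀ q ∈ P, f q.1 = f q.2 + 1)
    (hfr : f r = 0) (hv : v ∈ treeVertices r P) : treeDepth r P v = f v := by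
  induction hT.reaches_root v hv using Relation.ReflTransGen.head_induction_on with
  | refl => rw [treeDepth_root, hfr]
  | head hvb _ ih => rw [hT.treeDepth_eq_succ hvb, ih (hT.parent_mem _ hvb), hf _ hvb]

end IsRootedTree

def treeChildren (r : V) (P : Finset (V × V)) : Finset V :=
  (P.filter fun q => q.2 = r).image Prod.fst

theorem mem_treeChildren : c ∈ treeChildren r P ↔ (c, r) ∈ P := by
  simp [treeChildren]

def subtreeVertices (r : V) (P : Finset (V × V)) (c : V) : Finset V :=
  (treeVertices r P).filter fun v => Relation.ReflTransGen (fun x y => (x, y) ∈ P) v c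

def subtreePairs (r : V) (P : Finset (V × V)) (c : V) : Finset (V × V) :=
  P.filter fun q => q.1 ∈ subtreeVertices r P c ∧ q.1 ≠ c

theorem subtreePairs_subset : subtreePairs r P c ⊆ P := filter_subset _ _

namespace IsRootedTree

theorem root_notMem_subtreeVertices (hT : IsRootedTree r P) (hc : c ∈ treeChildren r P) :
    r ∉ subtreeVertices r P c := by
  intro h
  rcases (mem_filter.1 h).2.cases_head with hrc | ⟨b, hrb, -⟩
  · exact hT.child_ne_root _ (mem_treeChildren.1 hc) hrc.symm
  · exact hT.child_ne_root _ hrb rfl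

theorem parent_mem_subtreeVertices (hT : IsRootedTree r P) (hv : v ∈ subtreeVertices r P c)
    (hvc : v ≠ c) (hvu : (v, u) ∈ P) : u ∈ subtreeVertices r P c := by
  obtain ⟨-, hvc'⟩ := mem_filter.1 hv
  rcases hvc'.cases_head with h | ⟨b, hvb, hbc⟩
  · exact absurd h hvc
  · cases hT.functional _ _ _ hvb hvu
    exact mem_filter.2 ⟨hT.parent_mem _ hvb, hbc⟩

theorem treeVertices_subtreePairs (hT : IsRootedTree r P) (hc : c ∈ treeChildren r P) :
    treeVertices c (subtreePairs r P c) = subtreeVertices r P c := by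
  ext v
  constructor
  · intro hv
    rcases mem_insert.1 hv with rfl | hv
    · exact mem_filter.2 ⟨fst_mem_treeVertices (mem_treeChildren.1 hc), .refl⟩
    · obtain ⟨q, hq, rfl⟩ := mem_image.1 hv
      exact (mem_filter.1 hq).2.1
  · intro hv
    by_cases hvc : v = c
    · exact hvc ▸ root_mem_treeVertices
    · have hvr : v ≠ r := fun h => hT.root_notMem_subtreeVertices hc (h ▸ hv)
      obtain ⟨u, hvu⟩ := exists_parent (mem_filter.1 hv).1 hvr
      exact fst_mem_treeVertices (q := (v, u)) (mem_filter.2 ⟨hvu, hv, hvc⟩)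

theorem subtree (hT : IsRootedTree r P) (hc : c ∈ treeChildren r P) :
    IsRootedTree c (subtreePairs r P c) where
  parent_mem q hq := by
    obtain ⟨hqP, hq1, hq1c⟩ := mem_filter.1 hq
    rw [hT.treeVertices_subtreePairs hc]
    exact hT.parent_mem_subtreeVertices hq1 hq1c hqP
  child_ne_root q hq := (mem_filter.1 hq).2.2
  parent_unique q hq q' hq' := hT.parent_unique q (mem_filter.1 hq).1 q' (mem_filter.1 hq').1
  reaches_root v hv := by
    rw [hT.treeVertices_subtreePairs hc] at hv
    obtain ⟨-, hvc⟩ := mem_filter.1 hv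
    induction hvc using Relation.ReflTransGen.head_induction_on with
    | refl => rfl
    | head hvb hbc ih =>
      rename_i v b
      by_cases h : v = c
      · exact h ▸ .refl
      · have hb := hT.parent_mem_subtreeVertices hv h hvb
        exact .head (mem_filter.2 ⟨hvb, hv, h⟩) (ih hb)

theorem disjoint_subtreeVertices (hT : IsRootedTree r P) {c c' : V} (hc : c ∈ treeChildren r P)
    (hc' : c' ∈ treeChildren r P) (hne : c ≠ c') :
    Disjoint (subtreeVertices r P c) (subtreeVertices r P c') := by
  have key : ∀ c c', c ∈ treeChildren r P → c' ∈ treeChildren r P → c ≠ c' →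
      ∀ m n v, m ≤ n → RelWalk (fun x y => (x, y) ∈ P) m v c →
        RelWalk (fun x y => (x, y) ∈ P) n v c' → False := by
    intro c c' hc hc' hne m n v hmn hm hn
    have hw := hm.sub_of_functional hT.functional hmn hn
    rcases hk : n - m with _ | _ | k <;> rw [hk] at hw
    · exact hne hw
    · obtain ⟨d, hcd, hdc'⟩ := hw
      cases hT.functional _ _ _ hcd (mem_treeChildren.1 hc)
      exact hT.child_ne_root _ (mem_treeChildren.1 hc') hdc'.symm
    · obtain ⟨d, hcd, e, hde, -⟩ := hw
      cases hT.functional _ _ _ hcd (mem_treeChildren.1 hc)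
      exact hT.child_ne_root _ hde rfl
  rw [Finset.disjoint_left]
  intro v hv hv'
  obtain ⟨m, hm⟩ := reflTransGen_iff_exists_relWalk.1 (mem_filter.1 hv).2
  obtain ⟨n, hn⟩ := reflTransGen_iff_exists_relWalk.1 (mem_filter.1 hv').2
  rcases le_total m n with h | h
  · exact key c c' hc hc' hne m n v h hm hn
  · exact key c' c hc' hc hne.symm n m v h hn hm

theorem exists_mem_subtreeVertices (hT : IsRootedTree r P) (hv : v ∈ treeVertices r P)
    (hvr : v ≠ r) :
    ∃ c ∈ treeChildren r P, v ∈ subtreeVertices r P c := by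
  obtain ⟨n, hn⟩ := hT.exists_relWalk hv
  obtain ⟨n, rfl⟩ : ∃ m, n = m + 1 := Nat.exists_eq_succ_of_ne_zero (by rintro rfl; exact hvr hn)
  obtain ⟨c, hvc, hcr⟩ := relWalk_succ_iff.1 hn
  exact ⟨c, mem_treeChildren.2 hcr,
    mem_filter.2 ⟨hv, reflTransGen_iff_exists_relWalk.2 ⟨n, hvc⟩⟩⟩

theorem treeVertices_eq_insert_biUnion (hT : IsRootedTree r P) :
    treeVertices r P = insert r ((treeChildren r P).biUnion (subtreeVertices r P)) := by
  ext v
  simp only [mem_insert, mem_biUnion]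
  constructor
  · intro hv
    by_cases hvr : v = r
    · exact .inl hvr
    · exact .inr (hT.exists_mem_subtreeVertices hv hvr)
  · rintro (rfl | ⟨c, -, hv⟩)
    · exact root_mem_treeVertices
    · exact (mem_filter.1 hv).1

theorem root_notMem_biUnion (hT : IsRootedTree r P) :
    r ∉ (treeChildren r P).biUnion (subtreeVertices r P) := by
  simp only [mem_biUnion, not_exists, not_and]
  exact fun c hc => hT.root_notMem_subtreeVertices hc

theorem card_treeVertices (hT : IsRootedTree r P) :
    #(treeVertices r P) = 1 + ∑ c ∈ treeChildren r P, #(subtreeVertices r P c) := by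
  rw [hT.treeVertices_eq_insert_biUnion, card_insert_of_notMem hT.root_notMem_biUnion,
    card_biUnion fun c hc c' hc' => hT.disjoint_subtreeVertices hc hc', add_comm]

theorem prod_treeVertices (hT : IsRootedTree r P) {M : Type*} [CommMonoid M] (f : V → M) :
    ∏ v ∈ treeVertices r P, f v =
      f r * ∏ c ∈ treeChildren r P, ∏ v ∈ subtreeVertices r P c, f v := by
  rw [hT.treeVertices_eq_insert_biUnion, prod_insert hT.root_notMem_biUnion,
    prod_biUnion fun c hc c' hc' => hT.disjoint_subtreeVertices hc hc']

end IsRootedTree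

def graft (r : V) (F : Finset (V × Finset (V × V))) : Finset (V × V) :=
  F.biUnion fun t => insert (t.1, r) t.2

theorem IsRootedTree.graft_subtrees (hT : IsRootedTree r P) :
    graft r ((treeChildren r P).image fun c => (c, subtreePairs r P c)) = P := by
  ext q
  simp only [graft, mem_biUnion, mem_image, mem_insert]
  constructor
  · rintro ⟨_, ⟨c, hc, rfl⟩, rfl | hq⟩
    · exact mem_treeChildren.1 hc
    · exact subtreePairs_subset hq
  · intro hq
    obtain ⟨c, hc, hq1⟩ := hT.exists_mem_subtreeVertices (fst_mem_treeVertices hq)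
      (hT.child_ne_root q hq)
    refine ⟨_, ⟨c, hc, rfl⟩, ?_⟩
    by_cases hq1c : q.1 = c
    · left
      exact Prod.ext hq1c (hT.parent_unique q hq (c, r) (mem_treeChildren.1 hc) hq1c)
    · exact .inr (mem_filter.2 ⟨hq, hq1, hq1c⟩)

end RootedTree

section TreeSum

variable {V : Type*} (adj : V → V → Prop) (ψ : V → ℝ≥0∞)

def treeWeight (B : V) (t : V × Finset (V × V)) : ℝ≥0∞ :=
  if IsRootedTree t.1 t.2 ∧ (∀ q ∈ t.2, adj q.1 q.2) ∧ adj t.1 B then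
    ∏ v ∈ treeVertices t.1 t.2, ψ v
  else 0

def boundedTreeWeight (N : ℕ) (B : V) (t : V × Finset (V × V)) : ℝ≥0∞ :=
  if #(treeVertices t.1 t.2) ≤ N then treeWeight adj ψ B t else 0

def graftWeight (N : ℕ) (B : V) (x : V × Finset (V × Finset (V × V))) : ℝ≥0∞ :=
  if adj x.1 B then ψ x.1 * ∏ t ∈ x.2, boundedTreeWeight adj ψ N x.1 t else 0

def KoteckyPreiss (a : V → ℝ) : Prop :=
  ∀ B, ∑' A, (if adj A B then ψ A * ENNReal.ofReal (Real.exp (a A)) else 0) ≤ ENNReal.ofReal (a B)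

variable {adj ψ}

theorem boundedTreeWeight_succ_le {N : ℕ} {B r : V} {P : Finset (V × V)} :
    boundedTreeWeight adj ψ (N + 1) B (r, P) ≤
      graftWeight adj ψ N B (r, (treeChildren r P).image fun c => (c, subtreePairs r P c)) := by
  unfold boundedTreeWeight treeWeight
  split_ifs with hN hT
  · obtain ⟨hT, hadj, hrB⟩ : IsRootedTree r P ∧ (∀ q ∈ P, adj q.1 q.2) ∧ adj r B := hT
    have hsize : ∀ c ∈ treeChildren r P, #(subtreeVertices r P c) ≤ N := fun c hc => by
      have := single_le_sum (f := fun c => #(subtreeVertices r P c)) (fun _ _ => Nat.zero_le _) hc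
      have := hT.card_treeVertices
      simp only at hN
      omega
    have hsub : ∀ c ∈ treeChildren r P, boundedTreeWeight adj ψ N r (c, subtreePairs r P c) =
        ∏ v ∈ subtreeVertices r P c, ψ v := fun c hc => by
      have hc' := mem_treeChildren.1 hc
      rw [boundedTreeWeight, treeWeight, hT.treeVertices_subtreePairs hc, if_pos (hsize c hc),
        if_pos ⟨hT.subtree hc, fun q hq => hadj q (subtreePairs_subset hq), hadj _ hc'⟩]
    rw [graftWeight, if_pos hrB, hT.prod_treeVertices,
      prod_image fun c _ c' _ h => congrArg Prod.fst h, prod_congr rfl hsub]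
  all_goals exact zero_le

theorem tsum_boundedTreeWeight_succ_le (N : ℕ) (B : V) :
    ∑' t, boundedTreeWeight adj ψ (N + 1) B t ≤ ∑' x, graftWeight adj ψ N B x := by
  set g : V × Finset (V × Finset (V × V)) → V × Finset (V × V) := fun x => (x.1, graft x.1 x.2)
  rw [← ENNReal.tsum_fiberwise (graftWeight adj ψ N B) g]
  refine ENNReal.tsum_le_tsum fun ⟨r, P⟩ => ?_
  by_cases hT : IsRootedTree r P
  · refine boundedTreeWeight_succ_le.trans ?_
    exact ENNReal.le_tsum (f := fun x : g ⁻¹' {(r, P)} => graftWeight adj ψ N B x)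
      ⟨_, by simp [g, hT.graft_subtrees]⟩
  · simp [boundedTreeWeight, treeWeight, hT]

theorem tsum_graftWeight_le {a : V → ℝ} (ha : ∀ A, 0 ≤ a A) {N : ℕ}
    (hN : ∀ A, ∑' t, boundedTreeWeight adj ψ N A t ≤ ENNReal.ofReal (a A)) (B : V) :
    ∑' x, graftWeight adj ψ N B x ≤
      ∑' A, if adj A B then ψ A * ENNReal.ofReal (Real.exp (a A)) else 0 := by
  rw [ENNReal.tsum_prod']
  refine ENNReal.tsum_le_tsum fun A => ?_
  unfold graftWeight
  dsimp only
  split_ifs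
  · rw [ENNReal.tsum_mul_left]
    exact mul_le_mul_right (ENNReal.tsum_finset_prod_le_exp (ha A) (hN A)) _
  · simp

theorem tsum_boundedTreeWeight_le {a : V → ℝ} (ha : ∀ A, 0 ≤ a A)
    (hKP : KoteckyPreiss adj ψ a) (N : ℕ) (B : V) :
    ∑' t, boundedTreeWeight adj ψ N B t ≤ ENNReal.ofReal (a B) := by
  induction N generalizing B with
  | zero => simp [boundedTreeWeight, treeVertices]
  | succ N ih =>
    exact (tsum_boundedTreeWeight_succ_le N B).trans ((tsum_graftWeight_le ha ih B).trans (hKP B))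

theorem tsum_treeWeight_le {a : V → ℝ} (ha : ∀ A, 0 ≤ a A) (hKP : KoteckyPreiss adj ψ a)
    (B : V) :
    ∑' t, treeWeight adj ψ B t ≤ ENNReal.ofReal (a B) := by
  rw [ENNReal.tsum_eq_iSup_sum]
  refine iSup_le fun s => ?_
  calc ∑ t ∈ s, treeWeight adj ψ B t
      = ∑ t ∈ s, boundedTreeWeight adj ψ (s.sup fun t => #(treeVertices t.1 t.2)) B t :=
        sum_congr rfl fun t ht => (if_pos (le_sup (f := fun t => #(treeVertices t.1 t.2)) ht)).symm
    _ ≤ _ := ENNReal.sum_le_tsum s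
    _ ≤ _ := tsum_boundedTreeWeight_le ha hKP _ B

end TreeSum

section Penrose

variable {V : Type*} {K E : Finset (Sym2 V)} {S : Finset V} {T : Finset (V × V)}
  {r u v x y : V} {key : V → ℕ}

def SpanningConnected (S : Finset V) (E : Finset (Sym2 V)) : Prop :=
  ∀ x ∈ S, ∀ y ∈ S, Relation.ReflTransGen (fun u v => s(u, v) ∈ E) x y

def connectedEdgeSets (K : Finset (Sym2 V)) (S : Finset V) : Finset (Finset (Sym2 V)) :=
  K.powerset.filter (SpanningConnected S)

def spanningTrees (K : Finset (Sym2 V)) (S : Finset V) (r : V) : Finset (Finset (V × V)) :=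
  (S ×ˢ S).powerset.filter fun P =>
    IsRootedTree r P ∧ treeVertices r P = S ∧ ∀ q ∈ P, s(q.1, q.2) ∈ K

def treeEdges (T : Finset (V × V)) : Finset (Sym2 V) := T.image fun q => s(q.1, q.2)

def bfsLevel (E : Finset (Sym2 V)) (r v : V) : ℕ :=
  relDist (fun x y => s(x, y) ∈ E) r v

def bfsCandidates (S : Finset V) (E : Finset (Sym2 V)) (r v : V) : Finset V :=
  S.filter fun u => s(u, v) ∈ E ∧ bfsLevel E r u + 1 = bfsLevel E r v

/-- Junk value `v` when `v` has no candidate parent, e.g. for `v = r`. -/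
def bfsParent (key : V → ℕ) (S : Finset V) (E : Finset (Sym2 V)) (r v : V) : V :=
  if h : (bfsCandidates S E r v).Nonempty then
    Function.argminOn key (bfsCandidates S E r v : Set V) (coe_nonempty.2 h)
  else v

def bfsTree (key : V → ℕ) (S : Finset V) (E : Finset (Sym2 V)) (r : V) : Finset (V × V) :=
  (S.erase r).image fun v => (v, bfsParent key S E r v)

/-- The largest edge set whose BFS tree can be `T`: edges inside a level, and edges between
consecutive levels whose upper end does not beat the `T`-parent of the lower end in `key` order. -/
def allowedEdges (key : V → ℕ) (K : Finset (Sym2 V)) (r : V) (T : Finset (V × V)) :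
    Finset (Sym2 V) :=
  K.filter fun e => ∃ x y, e = s(x, y) ∧ (treeDepth r T x = treeDepth r T y ∨
    treeDepth r T y = treeDepth r T x + 1 ∧ ∀ u, (y, u) ∈ T → key u ≤ key x)

theorem SpanningConnected.exists_relWalk (h : SpanningConnected S E) (hr : r ∈ S) (hv : v ∈ S) :
    ∃ n, RelWalk (fun x y => s(x, y) ∈ E) n r v :=
  reflTransGen_iff_exists_relWalk.1 (h r hr v hv)

theorem SpanningConnected.bfsLevel_le_succ (h : SpanningConnected S E) (hr : r ∈ S)
    (hu : u ∈ S) (huv : s(u, v) ∈ E) : bfsLevel E r v ≤ bfsLevel E r u + 1 :=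
  relDist_le_succ (h.exists_relWalk hr hu) huv

theorem bfsCandidates_nonempty (hES : E ⊆ S.sym2) (hE : SpanningConnected S E) (hr : r ∈ S)
    (hv : v ∈ S) (hvr : v ≠ r) : (bfsCandidates S E r v).Nonempty := by
  obtain ⟨u, huv, -, hlev⟩ := exists_relDist_add_one_eq (hE.exists_relWalk hr hv) (Ne.symm hvr)
  exact ⟨u, mem_filter.2 ⟨(mk_mem_sym2_iff.1 (hES huv)).1, huv, hlev⟩⟩

theorem bfsParent_spec (hES : E ⊆ S.sym2) (hE : SpanningConnected S E) (hr : r ∈ S)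
    (hv : v ∈ S) (hvr : v ≠ r) :
    bfsParent key S E r v ∈ S ∧ s(bfsParent key S E r v, v) ∈ E ∧
      bfsLevel E r (bfsParent key S E r v) + 1 = bfsLevel E r v := by
  have h := bfsCandidates_nonempty hES hE hr hv hvr
  rw [bfsParent, dif_pos h]
  exact mem_filter.1 (Function.argminOn_mem _ _ _)

theorem key_bfsParent_le (hu : u ∈ bfsCandidates S E r v) :
    key (bfsParent key S E r v) ≤ key u := by
  rw [bfsParent, dif_pos ⟨u, hu⟩]
  exact Function.argminOn_le _ _ hu

theorem bfsParent_eq (hkey : Set.InjOn key S) (hu : u ∈ bfsCandidates S E r v)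
    (hmin : ∀ u' ∈ bfsCandidates S E r v, key u ≤ key u') : bfsParent key S E r v = u := by
  have hp : bfsParent key S E r v ∈ bfsCandidates S E r v := by
    rw [bfsParent, dif_pos ⟨u, hu⟩]
    exact Function.argminOn_mem _ _ _
  exact hkey (mem_filter.1 hp).1 (mem_filter.1 hu).1
    ((key_bfsParent_le hu).antisymm (hmin _ hp))

theorem mem_bfsTree :
    (v, u) ∈ bfsTree key S E r ↔ v ∈ S ∧ v ≠ r ∧ u = bfsParent key S E r v := by
  constructor
  · intro h
    obtain ⟨v, hv, h⟩ := mem_image.1 h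
    cases h
    exact ⟨mem_of_mem_erase hv, ne_of_mem_erase hv, rfl⟩
  · rintro ⟨h1, h2, rfl⟩
    exact mem_image.2 ⟨v, mem_erase.2 ⟨h2, h1⟩, rfl⟩

theorem treeVertices_bfsTree (hr : r ∈ S) : treeVertices r (bfsTree key S E r) = S := by
  rw [treeVertices, bfsTree, image_image]
  exact (congrArg (insert r) image_id').trans (insert_erase hr)

theorem isRootedTree_bfsTree (hES : E ⊆ S.sym2) (hE : SpanningConnected S E) (hr : r ∈ S) :
    IsRootedTree r (bfsTree key S E r) where
  parent_mem q hq := by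
    obtain ⟨hq1, hq1r, hq2⟩ := mem_bfsTree.1 hq
    rw [treeVertices_bfsTree hr, hq2]
    exact (bfsParent_spec hES hE hr hq1 hq1r).1
  child_ne_root q hq := (mem_bfsTree.1 hq).2.1
  parent_unique q hq q' hq' h := by
    rw [(mem_bfsTree.1 hq).2.2, (mem_bfsTree.1 hq').2.2, h]
  reaches_root v hv := by
    rw [treeVertices_bfsTree hr] at hv
    induction hn : bfsLevel E r v generalizing v with
    | zero => rw [eq_of_relDist_eq_zero (hE.exists_relWalk hr hv) hn]
    | succ n ih =>
      have hvr : v ≠ r := by rintro rfl; simp [bfsLevel] at hn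
      obtain ⟨hp, -, hlev⟩ := bfsParent_spec (key := key) hES hE hr hv hvr
      exact .head ((mem_bfsTree (v := v)).2 ⟨hv, hvr, rfl⟩) (ih _ hp (by omega))

theorem treeDepth_bfsTree (hES : E ⊆ S.sym2) (hE : SpanningConnected S E) (hr : r ∈ S)
    (hv : v ∈ S) : treeDepth r (bfsTree key S E r) v = bfsLevel E r v := by
  refine (isRootedTree_bfsTree hES hE hr).treeDepth_eq_of (fun q hq => ?_) (relDist_self r)
    (by rwa [treeVertices_bfsTree hr])
  obtain ⟨hq1, hq1r, hq2⟩ := mem_bfsTree.1 hq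
  rw [hq2]
  exact (bfsParent_spec hES hE hr hq1 hq1r).2.2.symm

theorem treeEdges_bfsTree_subset (hES : E ⊆ S.sym2) (hE : SpanningConnected S E) (hr : r ∈ S) :
    treeEdges (bfsTree key S E r) ⊆ E := by
  intro e he
  obtain ⟨q, hq, rfl⟩ := mem_image.1 he
  obtain ⟨hq1, hq1r, hq2⟩ := mem_bfsTree.1 hq
  rw [hq2, Sym2.eq_swap]
  exact (bfsParent_spec hES hE hr hq1 hq1r).2.1

theorem bfsTree_mem_spanningTrees (hEK : E ⊆ K) (hES : E ⊆ S.sym2) (hE : SpanningConnected S E)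
    (hr : r ∈ S) : bfsTree key S E r ∈ spanningTrees K S r := by
  have hT := isRootedTree_bfsTree (key := key) hES hE hr
  refine mem_filter.2 ⟨mem_powerset.2 fun q hq => ?_, hT, treeVertices_bfsTree hr, fun q hq => ?_⟩
  · rw [← treeVertices_bfsTree (key := key) (E := E) hr]
    exact mem_product.2 ⟨fst_mem_treeVertices hq, hT.parent_mem q hq⟩
  · exact hEK (treeEdges_bfsTree_subset hES hE hr (mem_image_of_mem _ hq))

theorem subset_allowedEdges_bfsTree (hEK : E ⊆ K) (hES : E ⊆ S.sym2) (hE : SpanningConnected S E)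
    (hr : r ∈ S) : E ⊆ allowedEdges key K r (bfsTree key S E r) := by
  intro e he
  induction e using Sym2.ind with
  | _ x y =>
    obtain ⟨hx, hy⟩ := mk_mem_sym2_iff.1 (hES he)
    have hxy := hE.bfsLevel_le_succ hr hx he
    have hyx := hE.bfsLevel_le_succ hr hy (Sym2.eq_swap ▸ he)
    refine mem_filter.2 ⟨hEK he, ?_⟩
    have parent_le : ∀ {x y}, x ∈ S → y ∈ S → s(x, y) ∈ E → bfsLevel E r y = bfsLevel E r x + 1 →
        ∀ u, (y, u) ∈ bfsTree key S E r → key u ≤ key x := fun hx hy he hlev u hu => by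
      have hu : u = bfsParent key S E r _ := (mem_bfsTree.1 hu).2.2
      rw [hu]
      exact key_bfsParent_le (mem_filter.2 ⟨hx, he, hlev.symm⟩)
    rcases Nat.lt_trichotomy (bfsLevel E r x) (bfsLevel E r y) with hlt | heq | hgt
    · refine ⟨x, y, rfl, .inr ⟨?_, parent_le hx hy he (by omega)⟩⟩
      rw [treeDepth_bfsTree hES hE hr hx, treeDepth_bfsTree hES hE hr hy]
      omega
    · refine ⟨x, y, rfl, .inl ?_⟩
      rw [treeDepth_bfsTree hES hE hr hx, treeDepth_bfsTree hES hE hr hy, heq]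
    · refine ⟨y, x, Sym2.eq_swap, .inr ⟨?_, parent_le hy hx (Sym2.eq_swap ▸ he) (by omega)⟩⟩
      rw [treeDepth_bfsTree hES hE hr hx, treeDepth_bfsTree hES hE hr hy]
      omega

theorem treeDepth_le_succ_of_mem_allowedEdges (h : s(x, y) ∈ allowedEdges key K r T) :
    treeDepth r T y ≤ treeDepth r T x + 1 := by
  obtain ⟨a, b, hab, hd⟩ := (mem_filter.1 h).2
  rcases Sym2.eq_iff.1 hab with ⟨rfl, rfl⟩ | ⟨rfl, rfl⟩ <;> rcases hd with hd | ⟨hd, -⟩ <;> omega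

theorem spanningConnected_of_treeEdges_subset (hT : IsRootedTree r T)
    (hS : treeVertices r T = S) (hTE : treeEdges T ⊆ E) : SpanningConnected S E := by
  have hswap : Function.swap (fun u v => s(u, v) ∈ E) = fun u v => s(u, v) ∈ E := by
    funext u v
    simp [Function.swap, Sym2.eq_swap]
  have toRoot : ∀ v ∈ S, Relation.ReflTransGen (fun u v => s(u, v) ∈ E) v r := fun v hv =>
    Relation.ReflTransGen.mono (p := fun u v => s(u, v) ∈ E)
      (fun a b (hab : (a, b) ∈ T) => hTE (mem_image_of_mem _ hab)) _ _ (hT.reaches_root v (hS ▸ hv))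
  intro x hx y hy
  exact (toRoot x hx).trans (Relation.reflTransGen_swap.1 (hswap ▸ toRoot y hy))

theorem relWalk_treeDepth (hT : IsRootedTree r T) (hS : treeVertices r T = S)
    (hTE : treeEdges T ⊆ E) (hv : v ∈ S) :
    RelWalk (fun x y => s(x, y) ∈ E) (treeDepth r T v) r v := by
  induction hn : treeDepth r T v generalizing v with
  | zero => exact (eq_of_relDist_eq_zero (hT.exists_relWalk (hS ▸ hv)) hn).symm
  | succ n ih =>
    have hvr : v ≠ r := by rintro rfl; simp at hn
    obtain ⟨u, hvu⟩ := exists_parent (hS ▸ hv) hvr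
    have hu := ih (hS ▸ hT.parent_mem _ hvu : u ∈ S) (by have := hT.treeDepth_eq_succ hvu; omega)
    have huv : s(u, v) ∈ E := Sym2.eq_swap ▸ hTE (mem_image_of_mem _ hvu)
    exact hu.append (.single huv)

theorem bfsLevel_eq_treeDepth (hT : IsRootedTree r T) (hS : treeVertices r T = S)
    (hTE : treeEdges T ⊆ E) (hED : E ⊆ allowedEdges key K r T) (hv : v ∈ S) :
    bfsLevel E r v = treeDepth r T v := by
  have hw := relWalk_treeDepth hT hS hTE hv
  refine (relDist_le hw).antisymm ?_
  simpa using (relWalk_relDist ⟨_, hw⟩).le_add (ℓ := treeDepth r T)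
    fun x y hxy => treeDepth_le_succ_of_mem_allowedEdges (hED hxy)

theorem bfsParent_eq_of_mem (hkey : Set.InjOn key S) (hT : IsRootedTree r T)
    (hS : treeVertices r T = S) (hTE : treeEdges T ⊆ E) (hED : E ⊆ allowedEdges key K r T)
    (hvu : (v, u) ∈ T) : bfsParent key S E r v = u := by
  have hlev {x} (hx : x ∈ S) := bfsLevel_eq_treeDepth hT hS hTE hED hx
  have hv : v ∈ S := hS ▸ fst_mem_treeVertices hvu
  have hu : u ∈ S := hS ▸ hT.parent_mem _ hvu
  have hdepth := hT.treeDepth_eq_succ hvu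
  refine bfsParent_eq hkey (mem_filter.2 ⟨hu, ?_, ?_⟩) fun u' hu' => ?_
  · exact Sym2.eq_swap ▸ hTE (mem_image_of_mem _ hvu)
  · rw [hlev hu, hlev hv, hdepth]
  · obtain ⟨hu'S, hu'E, hlev'⟩ := mem_filter.1 hu'
    rw [hlev hu'S, hlev hv] at hlev'
    obtain ⟨a, b, hab, hd⟩ := (mem_filter.1 (hED hu'E)).2
    rcases Sym2.eq_iff.1 hab with ⟨rfl, rfl⟩ | ⟨rfl, rfl⟩
    · rcases hd with hd | ⟨-, hmin⟩
      · omega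
      · exact hmin u hvu
    · rcases hd with hd | ⟨hd, -⟩ <;> omega

theorem bfsTree_eq (hkey : Set.InjOn key S) (hT : IsRootedTree r T) (hS : treeVertices r T = S)
    (hTE : treeEdges T ⊆ E) (hED : E ⊆ allowedEdges key K r T) : bfsTree key S E r = T := by
  ext ⟨v, u⟩
  rw [mem_bfsTree]
  constructor
  · rintro ⟨hv, hvr, rfl⟩
    obtain ⟨u, hvu⟩ := exists_parent (hS ▸ hv) hvr
    rwa [bfsParent_eq_of_mem hkey hT hS hTE hED hvu]
  · intro hvu
    exact ⟨hS ▸ fst_mem_treeVertices hvu, hT.child_ne_root _ hvu,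
      (bfsParent_eq_of_mem hkey hT hS hTE hED hvu).symm⟩

theorem filter_bfsTree_eq_Icc (hkey : Set.InjOn key S) (hK : K ⊆ S.sym2) (hr : r ∈ S)
    {E₀ : Finset (Sym2 V)} (hE₀ : E₀ ∈ connectedEdgeSets K S) :
    (connectedEdgeSets K S).filter (fun E => bfsTree key S E r = bfsTree key S E₀ r) =
      Icc (treeEdges (bfsTree key S E₀ r)) (allowedEdges key K r (bfsTree key S E₀ r)) := by
  obtain ⟨hE₀K, hE₀⟩ := mem_filter.1 hE₀
  have hE₀S := (mem_powerset.1 hE₀K).trans hK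
  have hT := isRootedTree_bfsTree (key := key) hE₀S hE₀ hr
  have hS := treeVertices_bfsTree (key := key) (E := E₀) hr
  ext E
  simp only [connectedEdgeSets, mem_filter, mem_powerset, mem_Icc]
  constructor
  · rintro ⟨⟨hEK, hE⟩, hTE⟩
    rw [← hTE]
    exact ⟨treeEdges_bfsTree_subset (hEK.trans hK) hE hr,
      subset_allowedEdges_bfsTree hEK (hEK.trans hK) hE hr⟩
  · rintro ⟨hTE, hED⟩
    exact ⟨⟨hED.trans (filter_subset _ _), spanningConnected_of_treeEdges_subset hT hS hTE⟩,
      bfsTree_eq hkey hT hS hTE hED⟩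

/-- Penrose's tree-graph inequality. -/
theorem abs_sum_connectedEdgeSets_le (hK : K ⊆ S.sym2) (hr : r ∈ S) :
    |∑ E ∈ connectedEdgeSets K S, (-1 : ℤ) ^ #E| ≤ #(spanningTrees K S r) := by
  obtain ⟨key, hkey⟩ := Set.countable_iff_exists_injOn.1 S.countable_toSet
  have hmaps : ∀ E ∈ connectedEdgeSets K S, bfsTree key S E r ∈ spanningTrees K S r :=
    fun E hE => by
      obtain ⟨hEK, hE⟩ := mem_filter.1 hE
      exact bfsTree_mem_spanningTrees (mem_powerset.1 hEK) ((mem_powerset.1 hEK).trans hK) hE hr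
  rw [← sum_fiberwise_of_maps_to hmaps]
  calc _ ≤ ∑ T ∈ spanningTrees K S r,
          |∑ E ∈ (connectedEdgeSets K S).filter (bfsTree key S · r = T), (-1 : ℤ) ^ #E| :=
        abs_sum_le_sum_abs _ _
    _ ≤ ∑ T ∈ spanningTrees K S r, 1 := sum_le_sum fun T _ => ?_
    _ = #(spanningTrees K S r) := by simp
  rcases ((connectedEdgeSets K S).filter fun E => bfsTree key S E r = T).eq_empty_or_nonempty
    with h | ⟨E₀, hE₀⟩
  · simp [h]
  · obtain ⟨hE₀C, rfl⟩ := mem_filter.1 hE₀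
    rw [filter_bfsTree_eq_Icc hkey hK hr hE₀C]
    exact abs_sum_Icc_neg_one_pow_card_le _ _

end Penrose

section RootedSpanningTrees

variable {V : Type*} (adj : V → V → Prop) (ψ : V → ℝ≥0∞)

def rootedSpanningTrees (K : Finset (Sym2 V)) (S : Finset V) (B : V) :
    Finset (V × Finset (V × V)) :=
  (S ×ˢ (S ×ˢ S).powerset).filter fun t => adj t.1 B ∧ t.2 ∈ spanningTrees K S t.1

variable {adj}

theorem card_spanningTrees_le {K : Finset (Sym2 V)} {S : Finset V} {r B : V} (hr : r ∈ S)
    (hrB : adj r B) : #(spanningTrees K S r) ≤ #(rootedSpanningTrees adj K S B) :=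
  card_le_card_of_injOn (fun P => (r, P))
    (fun _ hP => mem_filter.2 ⟨mem_product.2 ⟨hr, (mem_filter.1 hP).1⟩, hrB, hP⟩)
    (fun _ _ _ _ h => congrArg Prod.snd h)

theorem tsum_card_rootedSpanningTrees_le (K : Finset V → Finset (Sym2 V))
    (hK : ∀ S x y, s(x, y) ∈ K S → adj x y) (B : V) :
    ∑' S, #(rootedSpanningTrees adj (K S) S B) * ∏ v ∈ S, ψ v ≤ ∑' t, treeWeight adj ψ B t := by
  rw [← ENNReal.tsum_fiberwise (treeWeight adj ψ B) fun t => treeVertices t.1 t.2]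
  refine ENNReal.tsum_le_tsum fun S => ?_
  have hmem : ∀ t ∈ rootedSpanningTrees adj (K S) S B,
      IsRootedTree t.1 t.2 ∧ treeVertices t.1 t.2 = S ∧ (∀ q ∈ t.2, adj q.1 q.2) ∧ adj t.1 B :=
    fun t ht => by
      obtain ⟨-, htB, hP⟩ := mem_filter.1 ht
      obtain ⟨-, hT, hS, hK'⟩ := mem_filter.1 hP
      exact ⟨hT, hS, fun q hq => hK S _ _ (hK' q hq), htB⟩
  calc (#(rootedSpanningTrees adj (K S) S B) : ℝ≥0∞) * ∏ v ∈ S, ψ v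
      = ∑ t ∈ rootedSpanningTrees adj (K S) S B, treeWeight adj ψ B t := by
        rw [← nsmul_eq_mul, ← sum_const]
        refine sum_congr rfl fun t ht => ?_
        obtain ⟨hT, hS, hadj, htB⟩ := hmem t ht
        rw [treeWeight, if_pos ⟨hT, hadj, htB⟩, hS]
    _ = ∑' t : rootedSpanningTrees adj (K S) S B, treeWeight adj ψ B t :=
        (Finset.tsum_subtype _ _).symm
    _ ≤ _ := ENNReal.tsum_mono_subtype (s := ↑(rootedSpanningTrees adj (K S) S B))
        (t := (fun t : V × Finset (V × V) => treeVertices t.1 t.2) ⁻¹' {S}) _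
        fun t ht => (hmem t ht).2.1

end RootedSpanningTrees

section Polymers

variable {𝒜 : Finset (Finset ℕ)} {A : Finset ℕ}

def polymerEdges (𝒜 : Finset (Finset ℕ)) : Finset (Sym2 (Finset ℕ)) :=
  (𝒜.sym2.filter fun e => ¬ e.IsDiag).filter fun e => ∀ X Y, e = s(X, Y) → adjP X Y

theorem polymerEdges_subset_sym2 : polymerEdges 𝒜 ⊆ 𝒜.sym2 :=
  (filter_subset _ _).trans (filter_subset _ _)

theorem adjP_of_mem_polymerEdges {X Y : Finset ℕ} (h : s(X, Y) ∈ polymerEdges 𝒜) : adjP X Y :=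
  (mem_filter.1 h).2 X Y rfl

theorem truncWeight_eq (w : Finset ℕ → ℂ) (𝒜 : Finset (Finset ℕ)) :
    truncWeight w 𝒜 =
      ((∑ E ∈ connectedEdgeSets (polymerEdges 𝒜) 𝒜, (-1 : ℤ) ^ #E : ℤ) : ℂ) * ∏ A ∈ 𝒜, w A := by
  have hfilter : ((𝒜.sym2.filter fun e => ¬ e.IsDiag).powerset.filter (connectedOn 𝒜)).filter
      (· ⊆ polymerEdges 𝒜) = connectedEdgeSets (polymerEdges 𝒜) 𝒜 := by
    ext E
    simp only [connectedEdgeSets, mem_filter, mem_powerset]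
    exact ⟨fun ⟨⟨_, hE⟩, hEK⟩ => ⟨hEK, hE⟩,
      fun ⟨hEK, hE⟩ => ⟨⟨hEK.trans (filter_subset _ _), hE⟩, hEK⟩⟩
  rw [truncWeight, ← hfilter, sum_filter (· ⊆ polymerEdges 𝒜), Int.cast_sum, sum_mul]
  refine sum_congr rfl fun E hE => ?_
  rw [prod_boole]
  have hiff : (∀ e ∈ E, ∀ X Y, e = s(X, Y) → adjP X Y) ↔ E ⊆ polymerEdges 𝒜 :=
    ⟨fun h e he => mem_filter.2 ⟨mem_powerset.1 (mem_filter.1 hE).1 he, h e he⟩,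
      fun h e he => (mem_filter.1 (h he)).2⟩
  by_cases hE' : E ⊆ polymerEdges 𝒜
  · rw [if_pos (hiff.2 hE'), if_pos hE']
    push_cast
    ring
  · rw [if_neg (mt hiff.1 hE'), if_neg hE']
    simp

theorem norm_truncWeight_le (w : Finset ℕ → ℂ) {r : Finset ℕ} (hr : r ∈ 𝒜) :
    ‖truncWeight w 𝒜‖ ≤ #(spanningTrees (polymerEdges 𝒜) 𝒜 r) * ∏ A ∈ 𝒜, ‖w A‖ := by
  rw [truncWeight_eq, norm_mul, norm_prod, Complex.norm_intCast]
  gcongr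
  exact_mod_cast abs_sum_connectedEdgeSets_le polymerEdges_subset_sym2 hr

/-- The interval `[min A, max A]`, with the same junk values as `diamP` when `A = ∅`. -/
def hull (A : Finset ℕ) : Finset ℕ := Icc (A.min.untopD 0) (A.max.unbotD 0)

theorem card_hull (A : Finset ℕ) : #(hull A) = diamP A := by
  rw [hull, Nat.card_Icc, diamP]
  omega

theorem hull_eq (hA : A.Nonempty) : hull A = Icc (A.min' hA) (A.max' hA) := by
  rw [hull, ← coe_min' hA, ← coe_max' hA, WithTop.untopD_coe, WithBot.unbotD_coe]

/-- The hulls of the polymers of a cluster cover the hull of their union: a point `x` missed by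
all of them would split the cluster into the polymers left of `x` and those right of `x`, and
no adjacency can cross `x`. -/
theorem hull_sup_subset (hconn : clusterConn 𝒜) (hne : ∀ A ∈ 𝒜, A.Nonempty) (h𝒜 : 𝒜.Nonempty) :
    hull (𝒜.sup id) ⊆ 𝒜.biUnion hull := by
  obtain ⟨A₁, hA₁⟩ := h𝒜
  have hU : (𝒜.sup id).Nonempty := (hne A₁ hA₁).mono (le_sup (f := id) hA₁)
  intro x hx
  rw [hull_eq hU, mem_Icc] at hx
  by_contra hcov
  have straddle : ∀ A ∈ 𝒜, ∀ a ∈ A, ∀ b ∈ A, a ≤ x → x ≤ b → False := fun A hA a ha b hb hax hxb =>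
    hcov (mem_biUnion.2 ⟨A, hA, by
      rw [hull_eq (hne A hA), mem_Icc]
      exact ⟨(min'_le A a ha).trans hax, hxb.trans (le_max' A b hb)⟩⟩)
  have left : ∀ A ∈ 𝒜, ∀ a ∈ A, a ≤ x → ∀ b ∈ A, b < x := fun A hA a ha hax b hb =>
    lt_of_not_ge fun hxb => straddle A hA a ha b hb hax hxb
  obtain ⟨Amin, hAmin, hmin⟩ := mem_sup.1 (min'_mem _ hU)
  obtain ⟨Amax, hAmax, hmax⟩ := mem_sup.1 (max'_mem _ hU)
  have reach : ∀ Z, Relation.ReflTransGen (fun X Y => X ∈ 𝒜 ∧ Y ∈ 𝒜 ∧ adjP X Y) Amin Z →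
      ∃ b ∈ Z, b ≤ x := fun Z h => by
    induction h with
    | refl => exact ⟨_, hmin, hx.1⟩
    | tail _ hYZ ih =>
      obtain ⟨hY, -, a, ha, b, hb, -, hba⟩ := hYZ
      obtain ⟨y, hy, hyx⟩ := ih
      exact ⟨b, hb, by have := left _ hY y hy hyx a ha; omega⟩
  obtain ⟨y, hy, hyx⟩ := reach Amax (hconn Amin hAmin Amax hAmax)
  exact absurd hx.2 (not_le.2 (left _ hAmax y hy hyx _ hmax))

theorem diamP_sup_le_sum (hconn : clusterConn 𝒜) (hne : ∀ A ∈ 𝒜, A.Nonempty)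
    (h𝒜 : 𝒜.Nonempty) : diamP (𝒜.sup id) ≤ ∑ A ∈ 𝒜, diamP A := by
  simp only [← card_hull]
  exact (card_le_card (hull_sup_subset hconn hne h𝒜)).trans card_biUnion_le

theorem one_add_rpow_le_prod_diamP {α : ℝ} (hα : 0 ≤ α) (hconn : clusterConn 𝒜)
    (h2 : ∀ A ∈ 𝒜, 2 ≤ diamP A) (h𝒜 : 𝒜.Nonempty) {m : ℕ} (hm : m ≤ diamP (𝒜.sup id)) :
    (1 + m : ℝ) ^ α ≤ 2 ^ α * ∏ A ∈ 𝒜, (diamP A : ℝ) ^ α := by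
  have hne : ∀ A ∈ 𝒜, A.Nonempty := fun A hA => nonempty_iff_ne_empty.2 fun h => by
    have := h2 A hA
    simp [h, diamP] at this
  have hm' : m ≤ ∏ A ∈ 𝒜, diamP A :=
    hm.trans ((diamP_sup_le_sum hconn hne h𝒜).trans (sum_le_prod_of_two_le h2))
  have hone : 1 ≤ ∏ A ∈ 𝒜, diamP A := one_le_prod' fun A hA => (h2 A hA).trans' one_le_two
  rw [Real.finsetProd_rpow _ _ (fun _ _ => Nat.cast_nonneg _), ← Real.mul_rpow zero_le_two
    (prod_nonneg fun _ _ => Nat.cast_nonneg _)]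
  refine Real.rpow_le_rpow (by positivity) ?_ hα
  exact_mod_cast (by omega : 1 + m ≤ 2 * ∏ A ∈ 𝒜, diamP A)

theorem ofReal_norm_truncWeight_le {α : ℝ} (hα : 0 ≤ α) {w : Finset ℕ → ℂ}
    (hd : ∀ A : Finset ℕ, w A ≠ 0 → 1 < diamP A) {A₀ : Finset ℕ} {m : ℕ}
    (hconn : clusterConn 𝒜) (htouch : ∃ A ∈ 𝒜, adjP A A₀) (hm : m ≤ diamP (𝒜.sup id)) :
    ENNReal.ofReal ‖truncWeight w 𝒜‖ ≤ ENNReal.ofReal (2 ^ α * (1 + m : ℝ) ^ (-α)) *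
      (#(rootedSpanningTrees adjP (polymerEdges 𝒜) 𝒜 A₀) *
        ∏ A ∈ 𝒜, ENNReal.ofReal ((diamP A : ℝ) ^ α * ‖w A‖)) := by
  rw [← ENNReal.ofReal_prod_of_nonneg fun A _ => by positivity, ← ENNReal.ofReal_natCast,
    ← ENNReal.ofReal_mul (by positivity), ← ENNReal.ofReal_mul (by positivity)]
  refine ENNReal.ofReal_le_ofReal ?_
  obtain ⟨r, hr, hrA₀⟩ := htouch
  rcases em (∃ A ∈ 𝒜, w A = 0) with ⟨A, hA, hwA⟩ | hw
  · rw [truncWeight_eq, prod_eq_zero hA hwA, mul_zero, norm_zero]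
    positivity
  have hdecay := one_add_rpow_le_prod_diamP hα hconn
    (fun A hA => hd A fun h => hw ⟨A, hA, h⟩) ⟨r, hr⟩ hm
  calc ‖truncWeight w 𝒜‖
      ≤ #(spanningTrees (polymerEdges 𝒜) 𝒜 r) * ∏ A ∈ 𝒜, ‖w A‖ := norm_truncWeight_le w hr
    _ ≤ #(rootedSpanningTrees adjP (polymerEdges 𝒜) 𝒜 A₀) * ∏ A ∈ 𝒜, ‖w A‖ := by
        gcongr
        exact card_spanningTrees_le hr hrA₀
    _ = (1 + m : ℝ) ^ (-α) * (1 + m : ℝ) ^ α *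
          (#(rootedSpanningTrees adjP (polymerEdges 𝒜) 𝒜 A₀) * ∏ A ∈ 𝒜, ‖w A‖) := by
        rw [← Real.rpow_add (by positivity), neg_add_cancel, Real.rpow_zero, one_mul]
    _ ≤ (1 + m : ℝ) ^ (-α) * (2 ^ α * ∏ A ∈ 𝒜, (diamP A : ℝ) ^ α) *
          (#(rootedSpanningTrees adjP (polymerEdges 𝒜) 𝒜 A₀) * ∏ A ∈ 𝒜, ‖w A‖) := by
        gcongr
    _ = _ := by
        rw [prod_mul_distrib]
        ring

end Polymers

/-- Decay of cluster weights under the strengthened Kotecky–Preiss criterion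
`∑_{A ∼ A'} e^{δ|A|} d(A)^α |w(A)| ≤ δ|A'|`, when all polymers with nonzero weight have
diameter `> 1`: the truncated weights of clusters touching `A₀` and of diameter `≥ m`
sum to at most `C δ |A₀| (1+m)^{−α}`. -/
theorem cluster_weight_decay (α δ : ℝ) (hα : 0 < α) (hδ : 0 < δ)
    (w : Finset ℕ → ℂ)
    (hKP : ∀ A' : Finset ℕ,
      (∑' A : Finset ℕ, if adjP A A'
          then ENNReal.ofReal (Real.exp (δ * A.card) * (diamP A : ℝ) ^ α * ‖w A‖)
          else 0) ≤ ENNReal.ofReal (δ * A'.card))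
    (hd : ∀ A : Finset ℕ, w A ≠ 0 → 1 < diamP A) :
    ∃ C : ℝ, 0 < C ∧ ∀ (A₀ : Finset ℕ) (m : ℕ),
      (∑' 𝒜 : Finset (Finset ℕ),
          if clusterConn 𝒜 ∧ (∃ A ∈ 𝒜, adjP A A₀) ∧ m ≤ diamP (𝒜.sup id)
            then ENNReal.ofReal (‖truncWeight w 𝒜‖) else 0)
        ≤ ENNReal.ofReal (C * δ * A₀.card * (1 + m : ℝ) ^ (-α)) := by
  refine ⟨2 ^ α, by positivity, fun A₀ m => ?_⟩
  set ψ : Finset ℕ → ℝ≥0∞ := fun A => ENNReal.ofReal ((diamP A : ℝ) ^ α * ‖w A‖)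
  have hKP' : KoteckyPreiss adjP ψ fun A => δ * #A := fun B => by
    refine le_of_eq_of_le (tsum_congr fun A => ?_) (hKP B)
    split_ifs
    · rw [← ENNReal.ofReal_mul (by positivity)]
      ring_nf
    · rfl
  calc _ ≤ ∑' 𝒜, ENNReal.ofReal (2 ^ α * (1 + m : ℝ) ^ (-α)) *
          (#(rootedSpanningTrees adjP (polymerEdges 𝒜) 𝒜 A₀) * ∏ A ∈ 𝒜, ψ A) :=
        ENNReal.tsum_le_tsum fun 𝒜 => by
          split_ifs with h
          · exact ofReal_norm_truncWeight_le hα.le hd h.1 h.2.1 h.2.2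
          · exact zero_le
    _ ≤ ENNReal.ofReal (2 ^ α * (1 + m : ℝ) ^ (-α)) * ENNReal.ofReal (δ * #A₀) := by
        rw [ENNReal.tsum_mul_left]
        gcongr
        exact (tsum_card_rootedSpanningTrees_le ψ polymerEdges
          (fun _ _ _ => adjP_of_mem_polymerEdges) A₀).trans
          (tsum_treeWeight_le (fun A => by positivity) hKP' A₀)
    _ = _ := by
        rw [← ENNReal.ofReal_mul (by positivity)]
        ring_nf
end
end

section
/- Let h ∈ L¹(ℝ₊) and λ > 0, and for macroscopic times τ < τ' in ℕ define the edge factor ê(τ,τ') := ∫_{λ^{−2}[τ−1,τ]} du ∫_{λ^{−2}[τ'−1,τ']} dv · λ² C |h(v−u)|. If ∫₀^∞ (1+s)^α |h(s)| ds ≤ C₁ for some α > 0, then with ê_α(τ,τ') := (1 + |τ'−τ|)^α ê(τ,τ'), one has for every τ: ∑_{τ' ≠ τ} ê_α(τ,τ') ≤ C₂ · λ^{2 min(α,1)}, where C₂ depends only on C, C₁, α. -/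
/-!
By Tonelli and the substitution `s = v - u`, with `D = |τ' - τ|`,
`ê(τ,τ') ≤ C ∫ |h s| (1 - |λ²s - D|)₊ ds`: the tent `(1 - |λ²s - D|)₊` is `λ²` times the length
of the overlap of the window `λ⁻²[σ-1,σ]` with the window `λ⁻²[σ'-1,σ']` shifted by `-s`.
On the support of the tent, `λ²s ≥ D - 1`, and
`(1 + D)^α (1 - |λ²s - D|) ≤ 3^α λ^{2 min(α,1)} (1 + s)^α`: for `λ²s ≥ 1` because
`1 + D ≤ 3λ²s`, and for `λ²s < 1` because the tent is at most `λ²s ≤ (λ²s)^{min(α,1)}`.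
Every `s` lies in the support of at most two tents and every `D` comes from at most two `τ'`,
so the sum is at most `4 · 3^α C C₁ λ^{2 min(α,1)}`.
-/

open MeasureTheory Set
open scoped ENNReal

noncomputable section

/-- The edge factor `ê(τ,τ') = ∫_{λ⁻²[σ-1,σ]} du ∫_{λ⁻²[σ'-1,σ']} dv λ²C|h(v-u)|`
with `σ = min τ τ'`, `σ' = max τ τ'`. -/
def ehat (C lam : ℝ) (h : ℝ → ℂ) (τ τ' : ℕ) : ℝ :=
  ∫ u in Set.Icc (((min τ τ' : ℕ) - 1 : ℝ) / lam ^ 2) (((min τ τ' : ℕ) : ℝ) / lam ^ 2),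
    ∫ v in Set.Icc (((max τ τ' : ℕ) - 1 : ℝ) / lam ^ 2) (((max τ τ' : ℕ) : ℝ) / lam ^ 2),
      lam ^ 2 * C * ‖h (v - u)‖

theorem ENNReal.ofReal_mul_ofReal_le (p q : ℝ) :
    ENNReal.ofReal p * ENNReal.ofReal q ≤ ENNReal.ofReal (p * q) := by
  rcases le_or_gt 0 p with hp | hp
  · rw [ENNReal.ofReal_mul hp]
  · simp [ENNReal.ofReal_of_nonpos hp.le]

theorem ENNReal.tsum_comp_max_sub_min_le (f : ℕ → ℝ≥0∞) (τ : ℕ) :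
    ∑' n, f (max τ n - min τ n) ≤ 2 * ∑' d, f d := by
  have hinj : Function.Injective fun n => (decide (n < τ), max τ n - min τ n) := by
    intro n n' hnn'
    simp only [Prod.mk.injEq, decide_eq_decide] at hnn'
    omega
  calc ∑' n, f (max τ n - min τ n)
      ≤ ∑' p : Bool × ℕ, f p.2 := ENNReal.tsum_comp_le_tsum_of_injective hinj (fun p => f p.2)
    _ = 2 * ∑' d, f d := by
      rw [ENNReal.tsum_prod (f := fun _ d => f d), tsum_fintype]
      simp [two_mul]

theorem ENNReal.tsum_le_two_mul_of_abs_sub_lt_one {f : ℕ → ℝ≥0∞} {t : ℝ} {M : ℝ≥0∞}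
    (hf : ∀ n, f n ≤ M) (hnear : ∀ n, f n ≠ 0 → |t - n| < 1) : ∑' n, f n ≤ 2 * M := by
  set m := ⌊t⌋₊
  have hsupp : ∀ n ∉ ({m, m + 1} : Finset ℕ), f n = 0 := by
    intro n hn
    by_contra hfn
    obtain ⟨hlo, hhi⟩ := abs_lt.mp (hnear n hfn)
    have hmn : m < n + 1 := (Nat.floor_lt' n.succ_ne_zero).mpr (by push_cast; linarith)
    have hnm : (n : ℝ) < m + 2 := by linarith [Nat.lt_floor_add_one t]
    have : n < m + 2 := by exact_mod_cast hnm
    simp only [Finset.mem_insert, Finset.mem_singleton] at hn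
    omega
  rw [tsum_eq_sum hsupp, Finset.sum_pair (by omega), two_mul]
  exact add_le_add (hf m) (hf (m + 1))

theorem lintegral_lintegral_sub_eq {G : Type*} [MeasurableSpace G] [AddGroup G]
    [MeasurableAdd₂ G] (μ : Measure G) [SFinite μ] [μ.IsAddRightInvariant]
    {F : G → ℝ≥0∞} (hF : Measurable F) {A B : Set G} (hB : MeasurableSet B) :
    ∫⁻ u in A, ∫⁻ v in B, F (v - u) ∂μ ∂μ = ∫⁻ s, F s * μ (A ∩ (s + ·) ⁻¹' B) ∂μ := by
  have translate : ∀ u, ∫⁻ v in B, F (v - u) ∂μ = ∫⁻ s, F s * B.indicator 1 (s + u) ∂μ := by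
    intro u
    rw [← lintegral_indicator hB, ← lintegral_add_right_eq_self _ u]
    refine lintegral_congr fun s => ?_
    by_cases hs : s + u ∈ B <;> simp [hs]
  have hmeas :
      Measurable (Function.uncurry fun u s => F s * B.indicator (1 : G → ℝ≥0∞) (s + u)) :=
    (hF.comp measurable_snd).mul
      ((measurable_const.indicator hB).comp (measurable_snd.add measurable_fst))
  simp_rw [translate]
  rw [lintegral_lintegral_swap hmeas.aemeasurable]
  refine lintegral_congr fun s => ?_
  have hpre : MeasurableSet ((s + ·) ⁻¹' B) := hB.preimage (measurable_const_add s)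
  change ∫⁻ u in A, F s * ((s + ·) ⁻¹' B).indicator 1 u ∂μ = _
  rw [lintegral_const_mul _ (measurable_one.indicator hpre), lintegral_indicator_one hpre,
    Measure.restrict_apply hpre, inter_comm]

theorem lintegral_enorm_mul_ofReal_eq_ofReal_integral {X E : Type*} [MeasurableSpace X]
    {μ : Measure X} [NormedAddCommGroup E] {f : X → E} {g : X → ℝ} {S : Set X}
    (hS : MeasurableSet S) (hg : ∀ x ∈ S, 0 ≤ g x)
    (hint : IntegrableOn (fun x => g x * ‖f x‖) S μ) :
    ∫⁻ x in S, ‖f x‖ₑ * ENNReal.ofReal (g x) ∂μ = ENNReal.ofReal (∫ x in S, g x * ‖f x‖ ∂μ) := by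
  rw [ofReal_integral_eq_lintegral_ofReal hint
    ((ae_restrict_iff' hS).mpr (ae_of_all _ fun x hx => mul_nonneg (hg x hx) (norm_nonneg _)))]
  refine lintegral_congr fun x => ?_
  rw [ENNReal.ofReal_mul' (norm_nonneg _), ofReal_norm, mul_comm]

theorem volume_Icc_inter_Icc_add (x y L : ℝ) :
    volume (Icc x (x + L) ∩ Icc y (y + L)) = ENNReal.ofReal (L - |x - y|) := by
  rw [Icc_inter_Icc, Real.volume_Icc, min_add_add_right, ← max_sub_min_eq_abs']
  ring_nf

theorem volume_Icc_div_inter_preimage {c : ℝ} (hc : 0 < c) (a b s : ℝ) :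
    volume (Icc ((a - 1) / c) (a / c) ∩ (s + ·) ⁻¹' Icc ((b - 1) / c) (b / c)) =
      ENNReal.ofReal ((1 - |c * s - (b - a)|) / c) := by
  have hx : a / c = (a - 1) / c + 1 / c := by ring
  have hy : b / c - s = ((b - 1) / c - s) + 1 / c := by ring
  have key : |(a - 1) / c - ((b - 1) / c - s)| = |c * s - (b - a)| / c := by
    rw [← abs_of_pos hc, ← abs_div, abs_of_pos hc]
    congr 1
    field_simp
    ring
  rw [preimage_const_add_Icc, hx, hy, volume_Icc_inter_Icc_add, key]
  congr 1
  ring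

theorem rpow_sq_mul_le {lam s β γ α : ℝ} (hl : 0 < lam) (hl1 : lam ≤ 1) (hs : 0 ≤ s)
    (hβγ : β ≤ γ) (hγ : 0 ≤ γ) (hγα : γ ≤ α) :
    (lam ^ 2 * s) ^ γ ≤ lam ^ (2 * β) * (1 + s) ^ α := by
  have hlam : (lam ^ 2) ^ γ = lam ^ (2 * γ) := by
    rw [Real.rpow_mul hl.le, Real.rpow_two]
  rw [Real.mul_rpow (by positivity) hs, hlam]
  refine mul_le_mul (Real.rpow_le_rpow_of_exponent_ge hl hl1 (by linarith)) ?_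
    (by positivity) (by positivity)
  calc s ^ γ ≤ (1 + s) ^ γ := by gcongr; linarith
    _ ≤ (1 + s) ^ α := Real.rpow_le_rpow_of_exponent_le (by linarith) hγα

theorem rpow_one_add_mul_tent_le {α lam s D : ℝ} (hα : 0 < α) (hl : 0 < lam) (hl1 : lam ≤ 1)
    (hs : 0 ≤ s) (hD : 1 ≤ D) :
    (1 + D) ^ α * (1 - |lam ^ 2 * s - D|) ≤ 3 ^ α * lam ^ (2 * min α 1) * (1 + s) ^ α := by
  set t := lam ^ 2 * s
  have ht0 : 0 ≤ t := by positivity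
  rcases le_or_gt (1 - |t - D|) 0 with hneg | hpos
  · exact (mul_nonpos_of_nonneg_of_nonpos (by positivity) hneg).trans (by positivity)
  have hDt : 1 + D < 2 + t := by linarith [neg_abs_le (t - D)]
  rw [mul_assoc]
  rcases le_or_gt 1 t with ht1 | ht1
  · calc (1 + D) ^ α * (1 - |t - D|) ≤ (3 * t) ^ α * 1 := by
          gcongr
          · linarith
          · linarith [abs_nonneg (t - D)]
      _ = 3 ^ α * t ^ α := by rw [Real.mul_rpow (by norm_num) ht0, mul_one]
      _ ≤ _ := by
          gcongr
          exact rpow_sq_mul_le hl hl1 hs (min_le_left α 1) hα.le le_rfl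
  · calc (1 + D) ^ α * (1 - |t - D|) ≤ 3 ^ α * t := by
          gcongr
          · linarith
          · linarith [neg_abs_le (t - D)]
      _ ≤ 3 ^ α * t ^ min α 1 := by
          gcongr
          exact Real.self_le_rpow_of_le_one ht0 ht1.le (min_le_right α 1)
      _ ≤ _ := by
          gcongr
          exact rpow_sq_mul_le hl hl1 hs le_rfl (le_min hα.le zero_le_one) (min_le_left α 1)

theorem tsum_ofReal_rpow_one_add_mul_tent_le {α lam : ℝ} (hα : 0 < α) (hl : 0 < lam)
    (hl1 : lam ≤ 1) (s : ℝ) :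
    ∑' D : ℕ, (if D = 0 then 0 else ENNReal.ofReal ((1 + D) ^ α * (1 - |lam ^ 2 * s - D|))) ≤
      2 * ENNReal.ofReal (3 ^ α * lam ^ (2 * min α 1)) *
        (Ioi 0).indicator (fun s => ENNReal.ofReal ((1 + s) ^ α)) s := by
  rcases le_or_gt s 0 with hs | hs
  · have hzero : ∀ D : ℕ, (if D = 0 then 0 else
        ENNReal.ofReal ((1 + D) ^ α * (1 - |lam ^ 2 * s - D|))) = 0 := by
      intro D
      split_ifs with hD
      · rfl
      have hD1 : (1 : ℝ) ≤ D := by exact_mod_cast Nat.one_le_iff_ne_zero.mpr hD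
      have hts : lam ^ 2 * s ≤ 0 := mul_nonpos_of_nonneg_of_nonpos (by positivity) hs
      refine ENNReal.ofReal_of_nonpos (mul_nonpos_of_nonneg_of_nonpos (by positivity) ?_)
      linarith [neg_abs_le (lam ^ 2 * s - D)]
    simp [hzero]
  rw [indicator_of_mem (mem_Ioi.mpr hs), mul_assoc, ← ENNReal.ofReal_mul (by positivity)]
  refine ENNReal.tsum_le_two_mul_of_abs_sub_lt_one (t := lam ^ 2 * s) (fun D => ?_)
    (fun D hD => ?_)
  · split_ifs with hD
    · exact zero_le
    · exact ENNReal.ofReal_le_ofReal (rpow_one_add_mul_tent_le hα hl hl1 hs.le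
        (by exact_mod_cast Nat.one_le_iff_ne_zero.mpr hD))
  · split_ifs at hD with hD0
    · exact absurd rfl hD
    · have hpos := ENNReal.ofReal_pos.mp (pos_iff_ne_zero.mpr hD)
      have := pos_of_mul_pos_right hpos (by positivity)
      linarith

theorem ofReal_ehat_le (C : ℝ) {lam : ℝ} (hl : 0 < lam) {h : ℝ → ℂ} (hm : Measurable h)
    (τ τ' : ℕ) :
    ENNReal.ofReal (ehat C lam h τ τ') ≤ ENNReal.ofReal C *
      ∫⁻ s, ‖h s‖ₑ * ENNReal.ofReal (1 - |lam ^ 2 * s - ((max τ τ' - min τ τ' : ℕ) : ℝ)|) := by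
  have hl2 : 0 < lam ^ 2 := by positivity
  have hD : ((max τ τ' - min τ τ' : ℕ) : ℝ) = (max τ τ' : ℕ) - (min τ τ' : ℕ) :=
    Nat.cast_sub min_le_max
  set A := Icc (((min τ τ' : ℕ) - 1 : ℝ) / lam ^ 2) (((min τ τ' : ℕ) : ℝ) / lam ^ 2)
  set B := Icc (((max τ τ' : ℕ) - 1 : ℝ) / lam ^ 2) (((max τ τ' : ℕ) : ℝ) / lam ^ 2)
  have hlintegral : ENNReal.ofReal (∫ u in A, ∫ v in B, ‖h (v - u)‖) ≤
      ∫⁻ u in A, ∫⁻ v in B, ‖h (v - u)‖ₑ := by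
    refine (Real.ofReal_le_enorm _).trans ((enorm_integral_le_lintegral_enorm _).trans ?_)
    gcongr with u
    simpa only [enorm_norm] using enorm_integral_le_lintegral_enorm (fun v => ‖h (v - u)‖)
  rw [lintegral_lintegral_sub_eq volume hm.enorm measurableSet_Icc] at hlintegral
  unfold ehat
  simp only [integral_const_mul]
  rw [ENNReal.ofReal_mul' (integral_nonneg fun _ => integral_nonneg fun _ => norm_nonneg _),
    mul_comm _ C, ENNReal.ofReal_mul' hl2.le, mul_assoc]
  refine mul_le_mul_right ?_ _
  calc ENNReal.ofReal (lam ^ 2) * ENNReal.ofReal (∫ u in A, ∫ v in B, ‖h (v - u)‖)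
      ≤ ENNReal.ofReal (lam ^ 2) * ∫⁻ s, ‖h s‖ₑ * volume (A ∩ (s + ·) ⁻¹' B) := by gcongr
    _ = _ := by
      rw [← lintegral_const_mul' _ _ ENNReal.ofReal_ne_top]
      refine lintegral_congr fun s => ?_
      rw [volume_Icc_div_inter_preimage hl2, hD, mul_left_comm, ← ENNReal.ofReal_mul hl2.le,
        mul_div_cancel₀ _ hl2.ne']

theorem ofReal_rpow_mul_ehat_le (α C : ℝ) {lam : ℝ} (hl : 0 < lam) {h : ℝ → ℂ}
    (hm : Measurable h) (τ τ' : ℕ) :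
    ENNReal.ofReal ((1 + ((max τ τ' - min τ τ' : ℕ) : ℝ)) ^ α * ehat C lam h τ τ') ≤
      ENNReal.ofReal C * ∫⁻ s, ‖h s‖ₑ * ENNReal.ofReal
        ((1 + ((max τ τ' - min τ τ' : ℕ) : ℝ)) ^ α *
          (1 - |lam ^ 2 * s - ((max τ τ' - min τ τ' : ℕ) : ℝ)|)) := by
  set D : ℝ := ((max τ τ' - min τ τ' : ℕ) : ℝ)
  have ha : 0 ≤ (1 + D) ^ α := by positivity
  calc ENNReal.ofReal ((1 + D) ^ α * ehat C lam h τ τ')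
      ≤ ENNReal.ofReal ((1 + D) ^ α) *
          (ENNReal.ofReal C * ∫⁻ s, ‖h s‖ₑ * ENNReal.ofReal (1 - |lam ^ 2 * s - D|)) := by
        rw [ENNReal.ofReal_mul ha]
        gcongr
        exact ofReal_ehat_le C hl hm τ τ'
    _ = _ := by
        rw [mul_left_comm, ← lintegral_const_mul' _ _ ENNReal.ofReal_ne_top]
        simp_rw [ENNReal.ofReal_mul ha, mul_left_comm]

theorem tsum_ofReal_rpow_mul_ehat_le {α : ℝ} (hα : 0 < α) (C : ℝ) {lam : ℝ} (hl : 0 < lam)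
    (hl1 : lam ≤ 1) {h : ℝ → ℂ} (hm : Measurable h) (τ : ℕ) :
    (∑' τ' : ℕ, if 1 ≤ τ' ∧ τ' ≠ τ
        then ENNReal.ofReal ((1 + ((max τ τ' - min τ τ' : ℕ) : ℝ)) ^ α * ehat C lam h τ τ')
        else 0) ≤
      4 * ENNReal.ofReal C * ENNReal.ofReal (3 ^ α * lam ^ (2 * min α 1)) *
        ∫⁻ s in Ioi 0, ‖h s‖ₑ * ENNReal.ofReal ((1 + s) ^ α) := by
  set w : ℕ → ℝ → ℝ≥0∞ := fun d s =>
    if d = 0 then 0 else ENNReal.ofReal ((1 + d) ^ α * (1 - |lam ^ 2 * s - d|))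
  have hterm : ∀ τ', (if 1 ≤ τ' ∧ τ' ≠ τ then ENNReal.ofReal
      ((1 + ((max τ τ' - min τ τ' : ℕ) : ℝ)) ^ α * ehat C lam h τ τ') else 0) ≤
      ENNReal.ofReal C * ∫⁻ s, ‖h s‖ₑ * w (max τ τ' - min τ τ') s := by
    intro τ'
    split_ifs with hτ'
    · have hd : max τ τ' - min τ τ' ≠ 0 := by omega
      simpa only [w, if_neg hd] using ofReal_rpow_mul_ehat_le α C hl hm τ τ'
    · exact zero_le
  have hw : ∀ d, AEMeasurable (fun s => ‖h s‖ₑ * w d s) := fun d => by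
    unfold w; split_ifs <;> fun_prop
  calc _ ≤ ∑' τ', ENNReal.ofReal C * ∫⁻ s, ‖h s‖ₑ * w (max τ τ' - min τ τ') s :=
        ENNReal.tsum_le_tsum hterm
    _ ≤ 2 * ∑' d, ENNReal.ofReal C * ∫⁻ s, ‖h s‖ₑ * w d s :=
        ENNReal.tsum_comp_max_sub_min_le _ τ
    _ = 2 * ENNReal.ofReal C * ∫⁻ s, ‖h s‖ₑ * ∑' d, w d s := by
        simp_rw [ENNReal.tsum_mul_left, ← lintegral_tsum hw, ENNReal.tsum_mul_left, mul_assoc]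
    _ ≤ 2 * ENNReal.ofReal C * ∫⁻ s, ‖h s‖ₑ *
          (2 * ENNReal.ofReal (3 ^ α * lam ^ (2 * min α 1)) *
            (Ioi 0).indicator (fun s => ENNReal.ofReal ((1 + s) ^ α)) s) := by
        gcongr with s
        exact tsum_ofReal_rpow_one_add_mul_tent_le hα hl hl1 s
    _ = _ := by
        have hpull : ∀ (c : ℝ≥0∞) s,
            ‖h s‖ₑ * (c * (Ioi 0).indicator (fun s => ENNReal.ofReal ((1 + s) ^ α)) s) =
              c * (Ioi 0).indicator (fun s => ‖h s‖ₑ * ENNReal.ofReal ((1 + s) ^ α)) s := by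
          intro c s
          rw [indicator_mul_right]
          ring
        simp_rw [hpull]
        rw [lintegral_const_mul' _ _ (by finiteness), lintegral_indicator measurableSet_Ioi]
        ring

theorem edge_factor_sum_general (α C C₁ : ℝ) (hα : 0 < α) :
    ∃ C₂ : ℝ, ∀ (h : ℝ → ℂ) (lam : ℝ), 0 < lam → lam ≤ 1 →
      Measurable h →
      IntegrableOn (fun s => (1 + s) ^ α * ‖h s‖) (Set.Ioi 0) →
      (∫ s in Set.Ioi (0:ℝ), (1 + s) ^ α * ‖h s‖) ≤ C₁ →
      ∀ τ : ℕ, 1 ≤ τ →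
        (∑' τ' : ℕ, if 1 ≤ τ' ∧ τ' ≠ τ
            then ENNReal.ofReal
              ((1 + ((max τ τ' - min τ τ' : ℕ) : ℝ)) ^ α * ehat C lam h τ τ')
            else 0)
          ≤ ENNReal.ofReal (C₂ * lam ^ (2 * min α 1)) := by
  refine ⟨4 * 3 ^ α * (C * C₁), fun h lam hl hl1 hm hint hbound τ _ => ?_⟩
  calc _ ≤ 4 * ENNReal.ofReal C * ENNReal.ofReal (3 ^ α * lam ^ (2 * min α 1)) *
        ENNReal.ofReal (∫ s in Ioi 0, (1 + s) ^ α * ‖h s‖) := by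
        rw [← lintegral_enorm_mul_ofReal_eq_ofReal_integral measurableSet_Ioi
          (fun s (hs : 0 < s) => by positivity) hint]
        exact tsum_ofReal_rpow_mul_ehat_le hα C hl hl1 hm τ
    _ = 4 * ENNReal.ofReal (3 ^ α * lam ^ (2 * min α 1)) *
          (ENNReal.ofReal C * ENNReal.ofReal (∫ s in Ioi 0, (1 + s) ^ α * ‖h s‖)) := by ring
    _ ≤ 4 * ENNReal.ofReal (3 ^ α * lam ^ (2 * min α 1)) * ENNReal.ofReal (C * C₁) := by
        gcongr
        exact (ENNReal.ofReal_mul_ofReal_le C C₁).trans' (by gcongr)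
    _ = ENNReal.ofReal (4 * 3 ^ α * (C * C₁) * lam ^ (2 * min α 1)) := by
        rw [← ENNReal.ofReal_ofNat 4, ← ENNReal.ofReal_mul (by norm_num),
          ← ENNReal.ofReal_mul (by positivity)]
        ring_nf

/-- Summability of the distance-weighted edge factors: if
`∫₀^∞ (1+s)^α |h(s)| ds ≤ C₁`, then with
`ê_α(τ,τ') = (1+|τ'−τ|)^α ê(τ,τ')` one has `∑_{τ'≠τ} ê_α(τ,τ') ≤ C₂ λ^{2 min(α,1)}`
for every `τ`, where `C₂` depends only on `C`, `C₁` and `α`. -/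
theorem edge_factor_sum (α C C₁ : ℝ) (hα : 0 < α) (hC : 0 ≤ C) (hC₁ : 0 ≤ C₁) :
    ∃ C₂ : ℝ, ∀ (h : ℝ → ℂ) (lam : ℝ), 0 < lam → lam ≤ 1 →
      Measurable h →
      IntegrableOn (fun s => (1 + s) ^ α * ‖h s‖) (Set.Ioi 0) →
      (∫ s in Set.Ioi (0:ℝ), (1 + s) ^ α * ‖h s‖) ≤ C₁ →
      ∀ τ : ℕ, 1 ≤ τ →
        (∑' τ' : ℕ, if 1 ≤ τ' ∧ τ' ≠ τ
            then ENNReal.ofReal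
              ((1 + ((max τ τ' - min τ τ' : ℕ) : ℝ)) ^ α * ehat C lam h τ τ')
            else 0)
          ≤ ENNReal.ofReal (C₂ * lam ^ (2 * min α 1)) :=
  edge_factor_sum_general α C C₁ hα
end
end
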